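/- arXiv:2009.05270 — 2 statements merged into one kernel-verified Lean document; each statement's English description precedes it below -/
import Mathlib

section
/- Let F be a field, r, s, γ ∈ F and v ∈ F[h]. Then the generalized down-up algebra L(v,r,s,γ) is isomorphic as an F-algebra to the quantum generalized Heisenberg algebra H_s(rh−γ, −v). Conversely, any quantum generalized Heisenberg algebra H_q(f,g) with f(h) = ah + b for a, b ∈ F is isomorphic to the generalized down-up algebra L(−g, a, q, −b). -/
/-!
Both algebras are presented by three generators and three relations. For `f = r h - γ` the
relations of `H_s(f, -v)` become, after renaming `x ↦ u` and `y ↦ d`, exactly those of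
`L(v, r, s, γ)`, so the two universal properties give mutually inverse algebra maps. The converse
is the special case `v = -g`, `r = a`, `γ = -b`.
-/

open Polynomial

/-- The three generators `x`, `y`, `h` of a quantum generalized Heisenberg algebra. -/
inductive QGHAGen : Type
  | x : QGHAGen
  | y : QGHAGen
  | h : QGHAGen

/-- The defining relations of the quantum generalized Heisenberg algebra `H_q(f,g)`:
`h*x = x*f(h)`, `y*h = f(h)*y`, and `y*x - q*(x*y) = g(h)`. -/
inductive QGHARel (F : Type*) [Field F] (q : F) (f g : F[X]) :
    FreeAlgebra F QGHAGen → FreeAlgebra F QGHAGen → Prop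
  | hx : QGHARel F q f g
      (FreeAlgebra.ι F QGHAGen.h * FreeAlgebra.ι F QGHAGen.x)
      (FreeAlgebra.ι F QGHAGen.x * aeval (FreeAlgebra.ι F QGHAGen.h) f)
  | yh : QGHARel F q f g
      (FreeAlgebra.ι F QGHAGen.y * FreeAlgebra.ι F QGHAGen.h)
      (aeval (FreeAlgebra.ι F QGHAGen.h) f * FreeAlgebra.ι F QGHAGen.y)
  | yx : QGHARel F q f g
      (FreeAlgebra.ι F QGHAGen.y * FreeAlgebra.ι F QGHAGen.x)
      (q • (FreeAlgebra.ι F QGHAGen.x * FreeAlgebra.ι F QGHAGen.y)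
        + aeval (FreeAlgebra.ι F QGHAGen.h) g)

/-- The quantum generalized Heisenberg algebra `H_q(f,g)`. -/
def QGHA (F : Type*) [Field F] (q : F) (f g : F[X]) : Type _ :=
  RingQuot (QGHARel F q f g)

namespace QGHA

variable {F : Type*} [Field F] (q : F) (f g : F[X])

instance : Ring (QGHA F q f g) :=
  inferInstanceAs (Ring (RingQuot (QGHARel F q f g)))

instance : Algebra F (QGHA F q f g) :=
  inferInstanceAs (Algebra F (RingQuot (QGHARel F q f g)))

/-- The generator `x` of `H_q(f,g)`. -/
def x : QGHA F q f g :=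
  RingQuot.mkAlgHom F (QGHARel F q f g) (FreeAlgebra.ι F QGHAGen.x)

/-- The generator `y` of `H_q(f,g)`. -/
def y : QGHA F q f g :=
  RingQuot.mkAlgHom F (QGHARel F q f g) (FreeAlgebra.ι F QGHAGen.y)

/-- The generator `h` of `H_q(f,g)`. -/
def h : QGHA F q f g :=
  RingQuot.mkAlgHom F (QGHARel F q f g) (FreeAlgebra.ι F QGHAGen.h)

end QGHA
/-- The three generators `d`, `u`, `h` of a generalized down-up algebra. -/
inductive GDUAGen : Type
  | d : GDUAGen
  | u : GDUAGen
  | h : GDUAGen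

/-- The defining relations of the generalized down-up algebra `L(v,r,s,γ)`:
`d*h - r*(h*d) + γ*d = 0`, `h*u - r*(u*h) + γ*u = 0`, and `d*u - s*(u*d) + v(h) = 0`. -/
inductive GDUARel (F : Type*) [Field F] (v : Polynomial F) (r s γ : F) :
    FreeAlgebra F GDUAGen → FreeAlgebra F GDUAGen → Prop
  | dh : GDUARel F v r s γ
      (FreeAlgebra.ι F GDUAGen.d * FreeAlgebra.ι F GDUAGen.h)
      (r • (FreeAlgebra.ι F GDUAGen.h * FreeAlgebra.ι F GDUAGen.d)
        - γ • FreeAlgebra.ι F GDUAGen.d)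
  | hu : GDUARel F v r s γ
      (FreeAlgebra.ι F GDUAGen.h * FreeAlgebra.ι F GDUAGen.u)
      (r • (FreeAlgebra.ι F GDUAGen.u * FreeAlgebra.ι F GDUAGen.h)
        - γ • FreeAlgebra.ι F GDUAGen.u)
  | du : GDUARel F v r s γ
      (FreeAlgebra.ι F GDUAGen.d * FreeAlgebra.ι F GDUAGen.u)
      (s • (FreeAlgebra.ι F GDUAGen.u * FreeAlgebra.ι F GDUAGen.d)
        - Polynomial.aeval (FreeAlgebra.ι F GDUAGen.h) v)

/-- The generalized down-up algebra `L(v,r,s,γ)`. -/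
def GDUA (F : Type*) [Field F] (v : Polynomial F) (r s γ : F) : Type _ :=
  RingQuot (GDUARel F v r s γ)

instance {F : Type*} [Field F] (v : Polynomial F) (r s γ : F) : Ring (GDUA F v r s γ) :=
  inferInstanceAs (Ring (RingQuot (GDUARel F v r s γ)))

instance {F : Type*} [Field F] (v : Polynomial F) (r s γ : F) : Algebra F (GDUA F v r s γ) :=
  inferInstanceAs (Algebra F (RingQuot (GDUARel F v r s γ)))

namespace QGHA

variable {F : Type*} [Field F] {q : F} {f g : F[X]}

theorem h_mul_x : h q f g * x q f g = x q f g * aeval (h q f g) f := by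
  have hrel := RingQuot.mkAlgHom_rel F (QGHARel.hx (q := q) (f := f) (g := g))
  simp only [map_mul, ← aeval_algHom_apply] at hrel
  exact hrel

theorem y_mul_h : y q f g * h q f g = aeval (h q f g) f * y q f g := by
  have hrel := RingQuot.mkAlgHom_rel F (QGHARel.yh (q := q) (f := f) (g := g))
  simp only [map_mul, ← aeval_algHom_apply] at hrel
  exact hrel

theorem y_mul_x : y q f g * x q f g = q • (x q f g * y q f g) + aeval (h q f g) g := by
  have hrel := RingQuot.mkAlgHom_rel F (QGHARel.yx (q := q) (f := f) (g := g))
  simp only [map_mul, map_add, map_smul, ← aeval_algHom_apply] at hrel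
  exact hrel

variable {A : Type*} [Ring A] [Algebra F A]

noncomputable def lift (x₀ y₀ h₀ : A) (hx : h₀ * x₀ = x₀ * aeval h₀ f)
    (hy : y₀ * h₀ = aeval h₀ f * y₀) (hyx : y₀ * x₀ = q • (x₀ * y₀) + aeval h₀ g) :
    QGHA F q f g →ₐ[F] A :=
  RingQuot.liftAlgHom F ⟨FreeAlgebra.lift F fun | .x => x₀ | .y => y₀ | .h => h₀, by
    rintro _ _ (_ | _ | _) <;> simpa [← aeval_algHom_apply]⟩

section lift

variable {x₀ y₀ h₀ : A} {hx : h₀ * x₀ = x₀ * aeval h₀ f} {hy : y₀ * h₀ = aeval h₀ f * y₀}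
  {hyx : y₀ * x₀ = q • (x₀ * y₀) + aeval h₀ g}

@[simp]
theorem lift_x : lift x₀ y₀ h₀ hx hy hyx (x q f g) = x₀ :=
  (RingQuot.liftAlgHom_mkAlgHom_apply _ _ _ _).trans (FreeAlgebra.lift_ι_apply _ _)

@[simp]
theorem lift_y : lift x₀ y₀ h₀ hx hy hyx (y q f g) = y₀ :=
  (RingQuot.liftAlgHom_mkAlgHom_apply _ _ _ _).trans (FreeAlgebra.lift_ι_apply _ _)

@[simp]
theorem lift_h : lift x₀ y₀ h₀ hx hy hyx (h q f g) = h₀ :=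
  (RingQuot.liftAlgHom_mkAlgHom_apply _ _ _ _).trans (FreeAlgebra.lift_ι_apply _ _)

end lift

theorem algHom_ext {φ ψ : QGHA F q f g →ₐ[F] A} (hx : φ (x q f g) = ψ (x q f g))
    (hy : φ (y q f g) = ψ (y q f g)) (hh : φ (h q f g) = ψ (h q f g)) : φ = ψ :=
  RingQuot.ringQuot_ext' _ _ _ <| FreeAlgebra.hom_ext <| funext fun
    | .x => hx
    | .y => hy
    | .h => hh

end QGHA

namespace GDUA

variable {F : Type*} [Field F] (v : F[X]) (r s γ : F)

def d : GDUA F v r s γ := RingQuot.mkAlgHom F (GDUARel F v r s γ) (FreeAlgebra.ι F GDUAGen.d)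

def u : GDUA F v r s γ := RingQuot.mkAlgHom F (GDUARel F v r s γ) (FreeAlgebra.ι F GDUAGen.u)

def h : GDUA F v r s γ := RingQuot.mkAlgHom F (GDUARel F v r s γ) (FreeAlgebra.ι F GDUAGen.h)

variable {v r s γ}

theorem d_mul_h : d v r s γ * h v r s γ = r • (h v r s γ * d v r s γ) - γ • d v r s γ := by
  have hrel := RingQuot.mkAlgHom_rel F (GDUARel.dh (v := v) (r := r) (s := s) (γ := γ))
  simp only [map_mul, map_sub, map_smul] at hrel
  exact hrel

theorem h_mul_u : h v r s γ * u v r s γ = r • (u v r s γ * h v r s γ) - γ • u v r s γ := by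
  have hrel := RingQuot.mkAlgHom_rel F (GDUARel.hu (v := v) (r := r) (s := s) (γ := γ))
  simp only [map_mul, map_sub, map_smul] at hrel
  exact hrel

theorem d_mul_u : d v r s γ * u v r s γ = s • (u v r s γ * d v r s γ) - aeval (h v r s γ) v := by
  have hrel := RingQuot.mkAlgHom_rel F (GDUARel.du (v := v) (r := r) (s := s) (γ := γ))
  simp only [map_mul, map_sub, map_smul, ← aeval_algHom_apply] at hrel
  exact hrel

variable {A : Type*} [Ring A] [Algebra F A]

noncomputable def lift (d₀ u₀ h₀ : A) (hdh : d₀ * h₀ = r • (h₀ * d₀) - γ • d₀)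
    (hhu : h₀ * u₀ = r • (u₀ * h₀) - γ • u₀) (hdu : d₀ * u₀ = s • (u₀ * d₀) - aeval h₀ v) :
    GDUA F v r s γ →ₐ[F] A :=
  RingQuot.liftAlgHom F ⟨FreeAlgebra.lift F fun | .d => d₀ | .u => u₀ | .h => h₀, by
    rintro _ _ (_ | _ | _) <;> simpa [← aeval_algHom_apply]⟩

section lift

variable {d₀ u₀ h₀ : A} {hdh : d₀ * h₀ = r • (h₀ * d₀) - γ • d₀}
  {hhu : h₀ * u₀ = r • (u₀ * h₀) - γ • u₀} {hdu : d₀ * u₀ = s • (u₀ * d₀) - aeval h₀ v}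

@[simp]
theorem lift_d : lift d₀ u₀ h₀ hdh hhu hdu (d v r s γ) = d₀ :=
  (RingQuot.liftAlgHom_mkAlgHom_apply _ _ _ _).trans (FreeAlgebra.lift_ι_apply _ _)

@[simp]
theorem lift_u : lift d₀ u₀ h₀ hdh hhu hdu (u v r s γ) = u₀ :=
  (RingQuot.liftAlgHom_mkAlgHom_apply _ _ _ _).trans (FreeAlgebra.lift_ι_apply _ _)

@[simp]
theorem lift_h : lift d₀ u₀ h₀ hdh hhu hdu (h v r s γ) = h₀ :=
  (RingQuot.liftAlgHom_mkAlgHom_apply _ _ _ _).trans (FreeAlgebra.lift_ι_apply _ _)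

end lift

theorem algHom_ext {φ ψ : GDUA F v r s γ →ₐ[F] A} (hd : φ (d v r s γ) = ψ (d v r s γ))
    (hu : φ (u v r s γ) = ψ (u v r s γ)) (hh : φ (h v r s γ) = ψ (h v r s γ)) : φ = ψ :=
  RingQuot.ringQuot_ext' _ _ _ <| FreeAlgebra.hom_ext <| funext fun
    | .d => hd
    | .u => hu
    | .h => hh

end GDUA

section

variable {F : Type*} [Field F]

theorem aeval_C_mul_X_sub_C {A : Type*} [Ring A] [Algebra F A] (a : A) (r γ : F) :
    aeval a (C r * X - C γ) = r • a - γ • 1 := by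
  simp [Algebra.algebraMap_eq_smul_one]

variable (v : F[X]) (r s γ : F)

noncomputable def gduaToQgha : GDUA F v r s γ →ₐ[F] QGHA F s (C r * X - C γ) (-v) :=
  GDUA.lift (QGHA.y _ _ _) (QGHA.x _ _ _) (QGHA.h _ _ _)
    (by rw [QGHA.y_mul_h, aeval_C_mul_X_sub_C, sub_mul, smul_mul_assoc, smul_mul_assoc, one_mul])
    (by rw [QGHA.h_mul_x, aeval_C_mul_X_sub_C, mul_sub, mul_smul_comm, mul_smul_comm, mul_one])
    (by rw [QGHA.y_mul_x, map_neg, ← sub_eq_add_neg])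

noncomputable def qghaToGdua : QGHA F s (C r * X - C γ) (-v) →ₐ[F] GDUA F v r s γ :=
  QGHA.lift (GDUA.u _ _ _ _) (GDUA.d _ _ _ _) (GDUA.h _ _ _ _)
    (by rw [GDUA.h_mul_u, aeval_C_mul_X_sub_C, mul_sub, mul_smul_comm, mul_smul_comm, mul_one])
    (by rw [GDUA.d_mul_h, aeval_C_mul_X_sub_C, sub_mul, smul_mul_assoc, smul_mul_assoc, one_mul])
    (by rw [GDUA.d_mul_u, map_neg, ← sub_eq_add_neg])

noncomputable def gduaEquivQgha : GDUA F v r s γ ≃ₐ[F] QGHA F s (C r * X - C γ) (-v) :=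
  AlgEquiv.ofAlgHom (gduaToQgha v r s γ) (qghaToGdua v r s γ)
    (by apply QGHA.algHom_ext <;> simp [gduaToQgha, qghaToGdua])
    (by apply GDUA.algHom_ext <;> simp [gduaToQgha, qghaToGdua])

end

/-- For a field `F`, `r, s, γ ∈ F` and `v ∈ F[h]`, the generalized down-up
algebra `L(v,r,s,γ)` is isomorphic as an `F`-algebra to the quantum generalized Heisenberg
algebra `H_s(r·h − γ, −v)`.  Conversely, any quantum generalized Heisenberg algebra
`H_q(f,g)` with `f(h) = a·h + b` is isomorphic to `L(−g, a, q, −b)`. -/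
theorem gdua_iso_qgha {F : Type*} [Field F] :
    (∀ (v : F[X]) (r s γ : F),
      Nonempty (GDUA F v r s γ ≃ₐ[F] QGHA F s (C r * X - C γ) (-v))) ∧
    (∀ (q : F) (f g : F[X]) (a b : F), f = C a * X + C b →
      Nonempty (QGHA F q f g ≃ₐ[F] GDUA F (-g) a q (-b))) := by
  refine ⟨fun v r s γ => ⟨gduaEquivQgha v r s γ⟩, fun q f g a b hf => ?_⟩
  have e := gduaEquivQgha (-g) a q (-b)
  rw [map_neg, sub_neg_eq_add, ← hf, neg_neg] at e
  exact ⟨e.symm⟩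
end

section
/- Let F be a field, q ∈ F and f, g ∈ F[h]. With respect to the ℤ-grading of H_q(f,g) in which x has degree 1, h has degree 0 and y has degree −1, the homogeneous component of degree 0 is H_0 = ⊕_{i≥0} x^i F[h] y^i, and for every k ≥ 0 the homogeneous component of degree k equals x^k H_0 and the homogeneous component of degree −k equals H_0 y^k. -/
open Polynomial

/-- The subspace `x^i F[h] y^j` of `H_q(f,g)`. -/
noncomputable def QGHA.Mij {F : Type*} [Field F] (q : F) (f g : F[X]) (i j : ℕ) :
    Submodule F (QGHA F q f g) :=
  Submodule.span F
    {a | ∃ p : F[X], a = QGHA.x q f g ^ i * aeval (QGHA.h q f g) p * QGHA.y q f g ^ j}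

/-- The degree-`k` component of the ℤ-grading of `H_q(f,g)` in which `x` has degree `1`,
`h` has degree `0` and `y` has degree `−1`: it is spanned by the monomials
`x^i p(h) y^j` with `i − j = k`. -/
noncomputable def QGHA.grading {F : Type*} [Field F] (q : F) (f g : F[X]) (k : ℤ) :
    Submodule F (QGHA F q f g) :=
  ⨆ (i : ℕ) (j : ℕ) (_ : (i : ℤ) - (j : ℤ) = k), QGHA.Mij q f g i j

/-! The monomials `x^i p(h) y^j` span `H_q(f,g)`: their span contains `1` and is stable under
left multiplication by `x`, by `h` and by `y`, the last because `y x = q x y + g(h)` lets `y` pass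
to the right of `x`. Multiplying by `x`, `h` or `y` shifts the degree `i - j` by `1`, `0` or `-1`,
which gives the multiplicativity of the grading and the descriptions of `H_k` and `H_{-k}`.

Independence of the components comes from a model of `H_q(f,g)` acting on
`(ℕ × ℕ) →₀ F[X]`, the vector `single (i, j) p` standing for `x^i p(h) y^j`: applied to
`single (0, 0) 1`, the action sends `x^i p(h) y^j` to `single (i, j) p`, so that
`(ℕ × ℕ) →₀ F[X] → H_q(f,g)`, `single (i, j) p ↦ x^i p(h) y^j`, is injective. -/

theorem Polynomial.semiconjBy_aeval {R A : Type*} [CommSemiring R] [Semiring A] [Algebra R A]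
    {a b c : A} (h : SemiconjBy b c a) (p : R[X]) :
    SemiconjBy b (aeval c p) (aeval a p) := by
  induction p using Polynomial.induction_on' with
  | add p r hp hr => simpa only [map_add] using hp.add_right hr
  | monomial n r =>
    simp only [aeval_monomial]
    exact SemiconjBy.mul_right (Algebra.commutes r b).symm (h.pow_right n)

theorem Polynomial.comp_iterate_comp_succ {R : Type*} [CommSemiring R] (r f : R[X]) (n : ℕ) :
    r.comp ((f.comp)^[n + 1] X) = (r.comp f).comp ((f.comp)^[n] X) := by
  rw [Function.iterate_succ_apply', comp_assoc]

theorem Submodule.eq_top_of_one_mem_of_mul_mem {R A : Type*} [CommSemiring R] [Semiring A]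
    [Algebra R A] {s : Set A} (hs : Algebra.adjoin R s = ⊤) {N : Submodule R A} (h1 : 1 ∈ N)
    (hmul : ∀ a ∈ s, ∀ n ∈ N, a * n ∈ N) : N = ⊤ := by
  have key : ∀ a : A, ∀ n ∈ N, a * n ∈ N := by
    intro a
    have ha : a ∈ Algebra.adjoin R s := hs ▸ Algebra.mem_top
    induction ha using Algebra.adjoin_induction with
    | mem a ha => exact hmul a ha
    | algebraMap r => exact fun n hn => (Algebra.smul_def r n) ▸ N.smul_mem r hn
    | add a b _ _ ha hb => exact fun n hn => (add_mul a b n).symm ▸ N.add_mem (ha n hn) (hb n hn)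
    | mul a b _ _ ha hb => exact fun n hn => (mul_assoc a b n).symm ▸ ha _ (hb n hn)
  exact eq_top_iff.mpr fun a _ => mul_one a ▸ key a 1 h1

theorem Finsupp.iSupIndep_supported {α ι R M : Type*} [Semiring R] [AddCommMonoid M] [Module R M]
    {W : ι → Set α} (hW : Pairwise (Function.onFun Disjoint W)) :
    iSupIndep fun k => Finsupp.supported M R (W k) := by
  intro k
  refine (Finsupp.disjoint_supported_supported (t := ⋃ (l) (_ : l ≠ k), W l)
    (Set.disjoint_iUnion₂_right.mpr fun l hl => hW hl.symm)).mono_right ?_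
  exact iSup₂_le fun l hl => Finsupp.supported_mono (Set.subset_iUnion₂ (s := fun l _ => W l) l hl)

namespace QGHA

section Monomials

variable {F : Type*} [Field F] {q : F} {f g : F[X]}

theorem aeval_h_mul_x (p : F[X]) :
    aeval (h q f g) p * x q f g = x q f g * aeval (h q f g) (p.comp f) := by
  rw [aeval_comp]
  exact ((semiconjBy_aeval h_mul_x.symm) p).symm

theorem aeval_h_mul_x_pow (p : F[X]) (n : ℕ) :
    aeval (h q f g) p * x q f g ^ n = x q f g ^ n * aeval (h q f g) (p.comp ((f.comp)^[n] X)) := by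
  induction n generalizing p with
  | zero => simp
  | succ n ih =>
    rw [pow_succ', ← mul_assoc, aeval_h_mul_x, mul_assoc, ih, ← mul_assoc, ← pow_succ',
      comp_iterate_comp_succ]

theorem y_mul_aeval_h (p : F[X]) :
    y q f g * aeval (h q f g) p = aeval (h q f g) (p.comp f) * y q f g := by
  rw [aeval_comp]
  exact semiconjBy_aeval y_mul_h p

noncomputable def stdMonomial (q : F) (f g : F[X]) (i j : ℕ) (p : F[X]) : QGHA F q f g :=
  x q f g ^ i * aeval (h q f g) p * y q f g ^ j

theorem x_pow_mul_stdMonomial (n i j : ℕ) (p : F[X]) :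
    x q f g ^ n * stdMonomial q f g i j p = stdMonomial q f g (n + i) j p := by
  simp only [stdMonomial, pow_add, mul_assoc]

theorem stdMonomial_mul_y_pow (n i j : ℕ) (p : F[X]) :
    stdMonomial q f g i j p * y q f g ^ n = stdMonomial q f g i (j + n) p := by
  simp only [stdMonomial, pow_add, mul_assoc]

theorem aeval_h_mul_stdMonomial (r : F[X]) (i j : ℕ) (p : F[X]) :
    aeval (h q f g) r * stdMonomial q f g i j p
      = stdMonomial q f g i j (r.comp ((f.comp)^[i] X) * p) := by
  simp only [stdMonomial, ← mul_assoc, aeval_h_mul_x_pow, map_mul]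

theorem Mij_le_grading (i j : ℕ) : Mij q f g i j ≤ grading q f g ((i : ℤ) - j) :=
  le_iSup_of_le i (le_iSup_of_le j (le_iSup_of_le rfl le_rfl))

theorem stdMonomial_mem_grading {i j : ℕ} {k : ℤ} (hij : (i : ℤ) - j = k) (p : F[X]) :
    stdMonomial q f g i j p ∈ grading q f g k :=
  hij ▸ Mij_le_grading i j (Submodule.subset_span ⟨p, rfl⟩)

theorem grading_le {k : ℤ} {N : Submodule F (QGHA F q f g)}
    (hN : ∀ i j : ℕ, (i : ℤ) - j = k → ∀ p, stdMonomial q f g i j p ∈ N) :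
    grading q f g k ≤ N :=
  iSup_le fun i => iSup_le fun j => iSup_le fun hij =>
    Submodule.span_le.mpr fun _ ⟨p, hp⟩ => hp ▸ hN i j hij p

theorem mul_mem_grading_of_mul_stdMonomial_mem {a : QGHA F q f g} {d : ℤ}
    (ha : ∀ (i j : ℕ) p, a * stdMonomial q f g i j p ∈ grading q f g ((i : ℤ) - j + d))
    {k : ℤ} {c : QGHA F q f g} (hc : c ∈ grading q f g k) : a * c ∈ grading q f g (k + d) :=
  grading_le (N := (grading q f g (k + d)).comap (LinearMap.mulLeft F a))
    (fun i j hij p => by subst hij; exact ha i j p) hc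

theorem x_pow_mul_mem_grading (n : ℕ) {k : ℤ} {c : QGHA F q f g} (hc : c ∈ grading q f g k) :
    x q f g ^ n * c ∈ grading q f g (k + n) := by
  refine mul_mem_grading_of_mul_stdMonomial_mem (fun i j p => ?_) hc
  rw [x_pow_mul_stdMonomial]
  exact stdMonomial_mem_grading (by push_cast; ring) p

theorem aeval_h_mul_mem_grading (r : F[X]) {k : ℤ} {c : QGHA F q f g}
    (hc : c ∈ grading q f g k) : aeval (h q f g) r * c ∈ grading q f g k := by
  refine add_zero k ▸ mul_mem_grading_of_mul_stdMonomial_mem (fun i j p => ?_) hc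
  rw [aeval_h_mul_stdMonomial, add_zero]
  exact stdMonomial_mem_grading rfl _

theorem y_mul_stdMonomial_mem_grading (i j : ℕ) (p : F[X]) :
    y q f g * stdMonomial q f g i j p ∈ grading q f g ((i : ℤ) - j + -1) := by
  induction i generalizing p with
  | zero =>
    have hy : y q f g * stdMonomial q f g 0 j p = stdMonomial q f g 0 (j + 1) (p.comp f) := by
      simp only [stdMonomial, pow_zero, one_mul, ← mul_assoc, y_mul_aeval_h, pow_succ']
    rw [hy]
    exact stdMonomial_mem_grading (by push_cast; ring) _
  | succ i ih =>
    have hy : y q f g * stdMonomial q f g (i + 1) j p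
        = q • (x q f g ^ 1 * (y q f g * stdMonomial q f g i j p))
          + aeval (h q f g) g * stdMonomial q f g i j p := by
      rw [add_comm i 1, ← x_pow_mul_stdMonomial 1, pow_one, ← mul_assoc, y_mul_x, add_mul,
        smul_mul_assoc, mul_assoc]
    rw [hy]
    refine Submodule.add_mem _ (Submodule.smul_mem _ q ?_) ?_
    · have hxy := x_pow_mul_mem_grading 1 (ih p)
      rwa [show (i : ℤ) - j + -1 + (1 : ℕ) = ((i + 1 : ℕ) : ℤ) - j + -1 by push_cast; ring] at hxy
    · have hgy : aeval (h q f g) g * stdMonomial q f g i j p ∈ grading q f g ((i : ℤ) - j) :=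
        aeval_h_mul_mem_grading g (stdMonomial_mem_grading rfl p)
      rwa [show (i : ℤ) - j = ((i + 1 : ℕ) : ℤ) - j + -1 by push_cast; ring] at hgy

theorem y_mul_mem_grading {k : ℤ} {c : QGHA F q f g} (hc : c ∈ grading q f g k) :
    y q f g * c ∈ grading q f g (k + -1) :=
  mul_mem_grading_of_mul_stdMonomial_mem y_mul_stdMonomial_mem_grading hc

theorem y_pow_mul_mem_grading (n : ℕ) {k : ℤ} {c : QGHA F q f g} (hc : c ∈ grading q f g k) :
    y q f g ^ n * c ∈ grading q f g (k - n) := by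
  induction n with
  | zero => simpa using hc
  | succ n ih =>
    have hyy := y_mul_mem_grading ih
    rwa [← mul_assoc, ← pow_succ', show k - n + -1 = k - (n + 1 : ℕ) by push_cast; ring] at hyy

theorem grading_mul (m n : ℤ) :
    grading q f g m * grading q f g n ≤ grading q f g (m + n) := by
  refine Submodule.mul_le.mpr fun a ha b hb => ?_
  refine grading_le (N := (grading q f g (m + n)).comap (LinearMap.mulRight F b))
    (fun i j hij p => ?_) ha
  have hb' := x_pow_mul_mem_grading i (aeval_h_mul_mem_grading p (y_pow_mul_mem_grading j hb))
  simp only [Submodule.mem_comap, LinearMap.mulRight_apply, stdMonomial, mul_assoc]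
  rwa [show n - j + i = m + n by omega] at hb'

theorem one_mem_grading_zero : (1 : QGHA F q f g) ∈ grading q f g 0 := by
  simpa [stdMonomial] using stdMonomial_mem_grading (q := q) (f := f) (g := g) (sub_self 0) 1

theorem grading_zero_eq_iSup_Mij_self : grading q f g 0 = ⨆ i : ℕ, Mij q f g i i := by
  refine le_antisymm (iSup_le fun i => iSup_le fun j => iSup_le fun hij => ?_) (iSup_le fun i => ?_)
  · obtain rfl : i = j := by omega
    exact le_iSup (fun i => Mij q f g i i) i
  · simpa using Mij_le_grading (q := q) (f := f) (g := g) i i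

theorem grading_natCast_eq_map_mulLeft (k : ℕ) :
    grading q f g k = (grading q f g 0).map (LinearMap.mulLeft F (x q f g ^ k)) := by
  refine le_antisymm (grading_le fun i j hij p => ?_) ?_
  · obtain rfl : i = k + j := by omega
    rw [← x_pow_mul_stdMonomial]
    exact Submodule.mem_map_of_mem (stdMonomial_mem_grading (sub_self _) p)
  · refine Submodule.map_le_iff_le_comap.mpr fun c hc => ?_
    simpa using x_pow_mul_mem_grading k hc

theorem grading_neg_natCast_eq_map_mulRight (k : ℕ) :
    grading q f g (-k) = (grading q f g 0).map (LinearMap.mulRight F (y q f g ^ k)) := by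
  refine le_antisymm (grading_le fun i j hij p => ?_) ?_
  · obtain rfl : j = i + k := by omega
    rw [← stdMonomial_mul_y_pow]
    exact Submodule.mem_map_of_mem (stdMonomial_mem_grading (sub_self _) p)
  · refine Submodule.map_le_iff_le_comap.mpr (grading_le fun i j hij p => ?_)
    rw [Submodule.mem_comap, LinearMap.mulRight_apply, stdMonomial_mul_y_pow]
    exact stdMonomial_mem_grading (by push_cast; omega) p

theorem adjoin_x_y_h_eq_top : Algebra.adjoin F {x q f g, y q f g, h q f g} = ⊤ := by
  refine eq_top_iff.mpr ?_
  rintro a -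
  obtain ⟨b, rfl⟩ := RingQuot.mkAlgHom_surjective F (QGHARel F q f g) a
  induction b using FreeAlgebra.induction with
  | grade0 r => rw [AlgHom.commutes]; exact Subalgebra.algebraMap_mem _ r
  | grade1 t =>
    apply Algebra.subset_adjoin
    cases t
    exacts [Or.inl rfl, Or.inr (Or.inl rfl), Or.inr (Or.inr rfl)]
  | mul a b ha hb => rw [map_mul]; exact Subalgebra.mul_mem _ ha hb
  | add a b ha hb => rw [map_add]; exact Subalgebra.add_mem _ ha hb

theorem iSup_grading_eq_top : ⨆ k, grading q f g k = ⊤ := by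
  refine Submodule.eq_top_of_one_mem_of_mul_mem adjoin_x_y_h_eq_top
    (Submodule.mem_iSup_of_mem 0 one_mem_grading_zero) fun a ha c hc => ?_
  have hshift : ∀ d : ℤ, (∀ k, ∀ c ∈ grading q f g k, a * c ∈ grading q f g (k + d)) →
      a * c ∈ ⨆ k, grading q f g k := fun d hd =>
    (iSup_le fun k => fun c hc => Submodule.mem_comap.mpr
      (Submodule.mem_iSup_of_mem (k + d) (hd k c hc)) :
        ⨆ k, grading q f g k ≤ (⨆ k, grading q f g k).comap (LinearMap.mulLeft F a)) hc
  rcases ha with rfl | rfl | rfl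
  · exact hshift 1 fun k c hc => by simpa using x_pow_mul_mem_grading 1 hc
  · exact hshift (-1) fun k c hc => y_mul_mem_grading hc
  · exact hshift 0 fun k c hc => by simpa using aeval_h_mul_mem_grading X hc

end Monomials

section NormalForm

open Finsupp

variable {F : Type*} [Field F]

noncomputable def xOp : Module.End F ((ℕ × ℕ) →₀ F[X]) :=
  lsum F fun ij => lsingle (ij.1 + 1, ij.2)

noncomputable def hOp (f : F[X]) : Module.End F ((ℕ × ℕ) →₀ F[X]) :=
  lsum F fun ij => (lsingle ij).comp (LinearMap.mulLeft F ((f.comp)^[ij.1] X))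

-- `y p(h) y^j = p(f(h)) y^(j+1)` and
-- `y x^(i+1) p(h) y^j = q x (y x^i p(h) y^j) + g(h) x^i p(h) y^j`
noncomputable def yOpOn (q : F) (f g : F[X]) : ℕ → ℕ → F[X] →ₗ[F] (ℕ × ℕ) →₀ F[X]
  | 0, j => (lsingle (0, j + 1)).comp (aeval f).toLinearMap
  | i + 1, j => q • xOp.comp (yOpOn q f g i j)
      + (lsingle (i, j)).comp (LinearMap.mulLeft F (g.comp ((f.comp)^[i] X)))

noncomputable def yOp (q : F) (f g : F[X]) : Module.End F ((ℕ × ℕ) →₀ F[X]) :=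
  lsum F fun ij => yOpOn q f g ij.1 ij.2

variable {q : F} {f g : F[X]}

theorem xOp_single (i j : ℕ) (p : F[X]) :
    xOp (single (i, j) p) = single (i + 1, j) p := by
  simp [xOp]

theorem xOp_pow_single (n i j : ℕ) (p : F[X]) :
    (xOp ^ n) (single (i, j) p) = single (i + n, j) p := by
  induction n with
  | zero => rfl
  | succ n ih => rw [pow_succ', Module.End.mul_apply, ih, xOp_single, add_assoc]

theorem hOp_single (i j : ℕ) (p : F[X]) :
    hOp f (single (i, j) p) = single (i, j) ((f.comp)^[i] X * p) := by
  simp [hOp]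

theorem aeval_hOp_single (r : F[X]) (i j : ℕ) (p : F[X]) :
    aeval (hOp f) r (single (i, j) p) = single (i, j) (r.comp ((f.comp)^[i] X) * p) := by
  induction r using Polynomial.induction_on' with
  | add r s hr hs => rw [map_add, LinearMap.add_apply, hr, hs, add_comp, add_mul, single_add]
  | monomial n a =>
    have hpow : ∀ m : ℕ, (hOp f ^ m) (single (i, j) p)
        = single (i, j) (((f.comp)^[i] X) ^ m * p) := by
      intro m
      induction m with
      | zero => simp
      | succ m ih => rw [pow_succ', Module.End.mul_apply, ih, hOp_single, pow_succ', mul_assoc]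
    rw [aeval_monomial, Module.End.mul_apply, Module.algebraMap_end_apply, hpow, smul_single,
      monomial_comp, smul_eq_C_mul, mul_assoc]

theorem yOp_single_zero (j : ℕ) (p : F[X]) :
    yOp q f g (single (0, j) p) = single (0, j + 1) (p.comp f) := by
  simp [yOp, yOpOn, comp_eq_aeval]

theorem yOp_single_succ (i j : ℕ) (p : F[X]) :
    yOp q f g (single (i + 1, j) p)
      = q • xOp (yOp q f g (single (i, j) p)) + single (i, j) (g.comp ((f.comp)^[i] X) * p) := by
  simp [yOp, yOpOn]

theorem yOp_pow_single_zero (n j : ℕ) :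
    (yOp q f g ^ n) (single (0, j) 1) = single (0, j + n) 1 := by
  induction n with
  | zero => rfl
  | succ n ih => rw [pow_succ', Module.End.mul_apply, ih, yOp_single_zero, one_comp, add_assoc]

theorem hOp_mul_xOp : hOp f * xOp = xOp * aeval (hOp f) f := by
  refine lhom_ext fun ⟨i, j⟩ p => ?_
  rw [Module.End.mul_apply, Module.End.mul_apply, xOp_single, hOp_single, aeval_hOp_single,
    xOp_single, Function.iterate_succ_apply']

theorem aeval_hOp_mul_xOp (s : F[X]) :
    aeval (hOp f) s * xOp = xOp * aeval (hOp f) (s.comp f) := by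
  rw [aeval_comp]
  exact (semiconjBy_aeval hOp_mul_xOp.symm s).symm

theorem yOp_aeval_hOp_single (r : F[X]) (i j : ℕ) (p : F[X]) :
    yOp q f g (aeval (hOp f) r (single (i, j) p))
      = aeval (hOp f) (r.comp f) (yOp q f g (single (i, j) p)) := by
  induction i generalizing r p with
  | zero =>
    simp only [aeval_hOp_single, yOp_single_zero, Function.iterate_zero_apply, comp_X, mul_comp]
  | succ i ih =>
    have hx : ∀ v, xOp (aeval (hOp f) ((r.comp f).comp f) v) = aeval (hOp f) (r.comp f) (xOp v) :=
      fun v => (LinearMap.congr_fun (aeval_hOp_mul_xOp (r.comp f)) v).symm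
    rw [aeval_hOp_single, yOp_single_succ, comp_iterate_comp_succ, ← aeval_hOp_single, ih,
      hx, yOp_single_succ, map_add, map_smul, aeval_hOp_single, mul_left_comm]

theorem yOp_mul_hOp : yOp q f g * hOp f = aeval (hOp f) f * yOp q f g := by
  refine lhom_ext fun ⟨i, j⟩ p => ?_
  simpa using yOp_aeval_hOp_single (q := q) (g := g) X i j p

theorem yOp_mul_xOp : yOp q f g * xOp = q • (xOp * yOp q f g) + aeval (hOp f) g := by
  refine lhom_ext fun ⟨i, j⟩ p => ?_
  rw [LinearMap.add_apply, Module.End.mul_apply, LinearMap.smul_apply, Module.End.mul_apply,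
    xOp_single, yOp_single_succ, aeval_hOp_single]

noncomputable def normalRep (q : F) (f g : F[X]) :
    QGHA F q f g →ₐ[F] Module.End F ((ℕ × ℕ) →₀ F[X]) :=
  RingQuot.liftAlgHom F ⟨FreeAlgebra.lift F fun
      | .x => xOp
      | .y => yOp q f g
      | .h => hOp f, by
    rintro _ _ ⟨⟩ <;>
      simp only [map_mul, map_add, map_smul, ← aeval_algHom_apply, FreeAlgebra.lift_ι_apply]
    exacts [hOp_mul_xOp, yOp_mul_hOp, yOp_mul_xOp]⟩

noncomputable def normalForm (q : F) (f g : F[X]) : QGHA F q f g →ₗ[F] (ℕ × ℕ) →₀ F[X] :=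
  LinearMap.applyₗ (single (0, 0) 1) ∘ₗ (normalRep q f g).toLinearMap

noncomputable def ofNormalForm (q : F) (f g : F[X]) : ((ℕ × ℕ) →₀ F[X]) →ₗ[F] QGHA F q f g :=
  lsum F fun ij => LinearMap.mulRight F (y q f g ^ ij.2) ∘ₗ LinearMap.mulLeft F (x q f g ^ ij.1) ∘ₗ
    (aeval (h q f g)).toLinearMap

theorem normalRep_x : normalRep q f g (x q f g) = xOp :=
  (RingQuot.liftAlgHom_mkAlgHom_apply _ _ _ _).trans (FreeAlgebra.lift_ι_apply _ _)

theorem normalRep_y : normalRep q f g (y q f g) = yOp q f g :=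
  (RingQuot.liftAlgHom_mkAlgHom_apply _ _ _ _).trans (FreeAlgebra.lift_ι_apply _ _)

theorem normalRep_h : normalRep q f g (h q f g) = hOp f :=
  (RingQuot.liftAlgHom_mkAlgHom_apply _ _ _ _).trans (FreeAlgebra.lift_ι_apply _ _)

theorem normalForm_stdMonomial (i j : ℕ) (p : F[X]) :
    normalForm q f g (stdMonomial q f g i j p) = single (i, j) p := by
  simp only [normalForm, stdMonomial, LinearMap.coe_comp, Function.comp_apply,
    AlgHom.toLinearMap_apply, LinearMap.applyₗ_apply_apply, map_mul, map_pow, normalRep_x,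
    normalRep_y, ← aeval_algHom_apply, normalRep_h, Module.End.mul_apply, yOp_pow_single_zero,
    aeval_hOp_single, xOp_pow_single, Function.iterate_zero_apply, comp_X, mul_one, zero_add]

theorem ofNormalForm_single (i j : ℕ) (p : F[X]) :
    ofNormalForm q f g (single (i, j) p) = stdMonomial q f g i j p := by
  simp [ofNormalForm, stdMonomial]

theorem ofNormalForm_injective : Function.Injective (ofNormalForm q f g) := by
  refine Function.LeftInverse.injective (g := normalForm q f g) fun v => ?_
  refine LinearMap.congr_fun (lhom_ext (φ := normalForm q f g ∘ₗ ofNormalForm q f g)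
    (ψ := LinearMap.id) fun ⟨i, j⟩ p => ?_) v
  rw [LinearMap.comp_apply, ofNormalForm_single, normalForm_stdMonomial, LinearMap.id_apply]

theorem iSupIndep_grading : iSupIndep (grading q f g) := by
  refine ((ofNormalForm q f g).iSupIndep_map ofNormalForm_injective
    (iSupIndep_supported (W := fun k : ℤ => {ij : ℕ × ℕ | (ij.1 : ℤ) - ij.2 = k})
      fun k l hkl => Set.disjoint_left.mpr fun ij hk hl => hkl (hk.symm.trans hl))).mono
    fun k => grading_le fun i j hij p => ?_
  rw [← ofNormalForm_single]
  exact Submodule.mem_map_of_mem (single_mem_supported F p hij)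

theorem iSupIndep_Mij_self : iSupIndep fun i : ℕ => Mij q f g i i := by
  refine ((ofNormalForm q f g).iSupIndep_map ofNormalForm_injective
    (iSupIndep_supported (W := fun i : ℕ => {(i, i)})
      fun k l hkl => Set.disjoint_singleton.mpr fun h => hkl (Prod.ext_iff.mp h).1)).mono
    fun i => Submodule.span_le.mpr ?_
  rintro _ ⟨p, rfl⟩
  rw [SetLike.mem_coe, ← stdMonomial, ← ofNormalForm_single]
  exact Submodule.mem_map_of_mem (single_mem_supported F p rfl)

end NormalForm

end QGHA

/-- The components `QGHA.grading q f g k` form a ℤ-grading of the algebra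
`H_q(f,g)` (they are independent with internal direct sum the whole algebra, `1` lies in
degree `0`, and the product of degrees `m` and `n` lands in degree `m+n`); the degree-`0`
component is `⊕_{i≥0} x^i F[h] y^i`, and for every `k ≥ 0` the degree-`k` component equals
`x^k H_0` while the degree-`(−k)` component equals `H_0 y^k`. -/
theorem qgha_grading {F : Type*} [Field F] (q : F) (f g : F[X]) :
    DirectSum.IsInternal (QGHA.grading q f g) ∧
    (1 : QGHA F q f g) ∈ QGHA.grading q f g 0 ∧
    (∀ m n : ℤ, QGHA.grading q f g m * QGHA.grading q f g n ≤ QGHA.grading q f g (m + n)) ∧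
    (QGHA.grading q f g 0 = ⨆ i : ℕ, QGHA.Mij q f g i i) ∧
    iSupIndep (fun i : ℕ => QGHA.Mij q f g i i) ∧
    (∀ k : ℕ,
      QGHA.grading q f g (k : ℤ) =
        (QGHA.grading q f g 0).map (LinearMap.mulLeft F (QGHA.x q f g ^ k)) ∧
      QGHA.grading q f g (-(k : ℤ)) =
        (QGHA.grading q f g 0).map (LinearMap.mulRight F (QGHA.y q f g ^ k))) :=
  ⟨DirectSum.isInternal_submodule_iff_iSupIndep_and_iSup_eq_top _ |>.mpr
      ⟨QGHA.iSupIndep_grading, QGHA.iSup_grading_eq_top⟩,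
    QGHA.one_mem_grading_zero, QGHA.grading_mul, QGHA.grading_zero_eq_iSup_Mij_self,
    QGHA.iSupIndep_Mij_self,
    fun k => ⟨QGHA.grading_natCast_eq_map_mulLeft k, QGHA.grading_neg_natCast_eq_map_mulRight k⟩⟩
end
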